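/- Let G be an infinite (g,o)-growing graph with g ≥ 1 and maximal degree Δ < ∞, and fix i ∈ {0,…,m}, S ⊆ L_i, U = F_{i+1} ∪ S. Then for every β > 0 and every subset C ⊆ U, μ_U^−({σ : σ_z = −1 for all z ∈ C and σ_z = +1 for all z ∈ ∂_V C ∩ U}) ≤ e^{−2gβ|C|}, where ∂_V C is the external vertex boundary of C. -/

import Mathlib

/- Common framework: Ising model with boundary conditions on (finite pieces of)
   locally finite graphs, heat-bath Glauber dynamics quantities. -/

open Finset
open scoped Classical

noncomputable section

namespace IsingGlauber

/-- The real spin value of a Boolean spin: `true ↦ +1`, `false ↦ -1`. -/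
def spin (b : Bool) : ℝ := if b then 1 else -1

variable {V : Type*}

/-- Neighbourhood finset of a vertex, from an explicit local finiteness witness. -/
def nbr (G : SimpleGraph V) (hlf : G.LocallyFinite) (x : V) : Finset V :=
  @SimpleGraph.neighborFinset V G x (hlf x)

/-- `G` is `(g,o)`-growing: every vertex `x` (say at distance `r` from `o`) has at
    least `g` more neighbours in level `r+1` than in the ball of radius `r`. -/
def IsGrowing (G : SimpleGraph V) (hlf : G.LocallyFinite) (g : ℕ) (o : V) : Prop :=
  ∀ x : V,
    ((nbr G hlf x).filter fun z => G.dist o z ≤ G.dist o x).card + g ≤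
      ((nbr G hlf x).filter fun z => G.dist o z = G.dist o x + 1).card

variable [DecidableEq V]

/-- External vertex boundary of a finite vertex set. -/
def vbd (G : SimpleGraph V) (hlf : G.LocallyFinite) (A : Finset V) : Finset V :=
  A.biUnion (fun a => nbr G hlf a) \ A

/-- Closure `A ∪ ∂_V A` of a finite vertex set. -/
def cl (G : SimpleGraph V) (hlf : G.LocallyFinite) (A : Finset V) : Finset V :=
  A ∪ vbd G hlf A

/-- Ising Hamiltonian (zero field) with boundary: `Σ_{(x,y) ∈ E(A ∪ ∂_V A)} σ_x σ_y`,
    the sum over edges with both endpoints in `A ∪ ∂_V A` (each edge counted once). -/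
def energyB (G : SimpleGraph V) (hlf : G.LocallyFinite) (A : Finset V) (σ : V → Bool) : ℝ :=
  (1 / 2) * ∑ x ∈ cl G hlf A, ∑ y ∈ (cl G hlf A).filter (fun y => G.Adj x y),
    spin (σ x) * spin (σ y)

/-- Free-boundary Ising Hamiltonian: `Σ_{(x,y) ∈ E(A)} σ_x σ_y`,
    the sum over edges with both endpoints in `A` (each edge counted once). -/
def energyF (G : SimpleGraph V) (A : Finset V) (σ : V → Bool) : ℝ :=
  (1 / 2) * ∑ x ∈ A, ∑ y ∈ A.filter (fun y => G.Adj x y), spin (σ x) * spin (σ y)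

/-- The configuration equal to `p` on `A` and to `η` off `A`. -/
def patch (A : Finset V) (η : V → Bool) (p : ∀ a ∈ A, Bool) : V → Bool :=
  fun v => if h : v ∈ A then p v h else η v

/-- Unnormalised Gibbs sum over configurations agreeing with `η` off `A`,
    with energy functional `E` (which should already include the factor `β`). -/
def wsum (E : (V → Bool) → ℝ) (A : Finset V) (η : V → Bool) (f : (V → Bool) → ℝ) : ℝ :=
  ∑ p ∈ A.pi (fun _ => (Finset.univ : Finset Bool)),
    Real.exp (E (patch A η p)) * f (patch A η p)

/-- Gibbs expectation of `f` for the measure on region `A` with boundary condition `η`. -/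
def gExp (E : (V → Bool) → ℝ) (A : Finset V) (η : V → Bool) (f : (V → Bool) → ℝ) : ℝ :=
  wsum E A η f / wsum E A η (fun _ => 1)

/-- Gibbs probability of an event. -/
def gProb (E : (V → Bool) → ℝ) (A : Finset V) (η : V → Bool) (P : (V → Bool) → Prop) : ℝ :=
  gExp E A η (fun σ => if P σ then 1 else 0)

/-- Gibbs variance of `f`. -/
def gVar (E : (V → Bool) → ℝ) (A : Finset V) (η : V → Bool) (f : (V → Bool) → ℝ) : ℝ :=
  gExp E A η (fun σ => f σ ^ 2) - gExp E A η f ^ 2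

/-- Dirichlet form of the heat-bath Glauber dynamics:
    `D(f) = Σ_{x ∈ A} μ(Var_x(f))`, where `Var_x(f)(σ)` is the variance of `f`
    under the one-site conditional Gibbs measure at `x` given `σ` elsewhere. -/
def dirich (E : (V → Bool) → ℝ) (A : Finset V) (η : V → Bool) (f : (V → Bool) → ℝ) : ℝ :=
  ∑ x ∈ A, gExp E A η (fun σ => gVar E {x} σ f)

/-- Spectral gap `c_gap(μ) = inf { D(f)/Var(f) : Var(f) ≠ 0 }`. -/
def cgap (E : (V → Bool) → ℝ) (A : Finset V) (η : V → Bool) : ℝ :=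
  sInf {r : ℝ | ∃ f : (V → Bool) → ℝ, gVar E A η f ≠ 0 ∧ r = dirich E A η f / gVar E A η f}

/-- The edge boundary of `C`, encoded as ordered pairs `(u,v)` with `u ∈ C`,
    `v ∉ C` and `u ~ v`; these pairs are in bijection with the boundary edges. -/
def obd (G : SimpleGraph V) (hlf : G.LocallyFinite) (C : Finset V) : Finset (V × V) :=
  (C ×ˢ C.biUnion (fun c => nbr G hlf c)).filter (fun p => G.Adj p.1 p.2 ∧ p.2 ∉ C)

end IsingGlauber

open IsingGlauber

/-! Flipping every spin of `C` is an injective map of configurations of `U`. On the event, `C`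
is minus and every neighbour one level above `C` and outside `C` is plus: inside `U` by the event,
outside `U` by the boundary condition, as `U` lies at levels `≥ i`. By growth, the vertices of `C`
have together at least `g |C|` more upward than downward neighbours outside `C` (edges inside `C`
contribute at least as many downward steps as upward ones), so the flip raises the energy by at
least `2 g |C|` and the Boltzmann weight by the factor `e^{2 g β |C|}`. -/

namespace IsingGlauber

variable {V : Type*} [DecidableEq V]

lemma spin_not (b : Bool) : spin (!b) = -spin b := by cases b <;> simp [spin]

lemma neg_one_le_spin (b : Bool) : -1 ≤ spin b := by cases b <;> norm_num [spin]

def flipOn (C : Finset V) (σ : V → Bool) : V → Bool := fun v => if v ∈ C then !σ v else σ v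

def flipPi {A : Finset V} (C : Finset V) (p : ∀ a ∈ A, Bool) : ∀ a ∈ A, Bool :=
  fun a ha => if a ∈ C then !p a ha else p a ha

lemma flipPi_injective {A : Finset V} (C : Finset V) :
    Function.Injective (flipPi (A := A) C) := by
  refine Function.LeftInverse.injective (g := flipPi C) fun p => ?_
  funext a ha
  by_cases h : a ∈ C <;> simp [flipPi, h]

lemma patch_flipPi {A C : Finset V} (hC : C ⊆ A) (η : V → Bool) (p : ∀ a ∈ A, Bool) :
    patch A η (flipPi C p) = flipOn C (patch A η p) := by
  funext v
  by_cases hvA : v ∈ A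
  · simp [patch, flipOn, flipPi, hvA]
  · have hvC : v ∉ C := fun h => hvA (hC h)
    simp [patch, flipOn, hvA, hvC]

section Graph

variable {G : SimpleGraph V} {hlf : G.LocallyFinite}

omit [DecidableEq V] in
lemma mem_nbr {x y : V} : y ∈ nbr G hlf x ↔ G.Adj x y := by
  simp [nbr, SimpleGraph.mem_neighborFinset]

lemma nbr_subset_cl {U : Finset V} {x : V} (hx : x ∈ U) : nbr G hlf x ⊆ cl G hlf U := by
  intro y hy
  by_cases hyU : y ∈ U
  · exact Finset.mem_union_left _ hyU
  · exact Finset.mem_union_right _ (Finset.mem_sdiff.mpr ⟨Finset.mem_biUnion.mpr ⟨x, hx, hy⟩, hyU⟩)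

lemma mem_vbd {C : Finset V} {x y : V} (hx : x ∈ C) (hxy : G.Adj x y) (hy : y ∉ C) :
    y ∈ vbd G hlf C :=
  Finset.mem_sdiff.mpr ⟨Finset.mem_biUnion.mpr ⟨x, hx, mem_nbr.mpr hxy⟩, hy⟩

lemma energyB_flipOn {U C : Finset V} (hC : C ⊆ U) (σ : V → Bool) :
    energyB G hlf U (flipOn C σ) =
      energyB G hlf U σ - 2 * ∑ x ∈ C, ∑ y ∈ nbr G hlf x \ C, spin (σ x) * spin (σ y) := by
  set K := cl G hlf U
  set bond : (V → Bool) → V → V → ℝ :=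
    fun τ x y => if G.Adj x y then spin (τ x) * spin (τ y) else 0
  set cut : V → V → ℝ :=
    fun x y => if x ∈ C ∧ y ∉ C ∧ G.Adj x y then spin (σ x) * spin (σ y) else 0
  have henergy : ∀ τ, energyB G hlf U τ = (1 / 2) * ∑ x ∈ K, ∑ y ∈ K, bond τ x y := by
    intro τ
    simp [energyB, K, bond, Finset.sum_filter]
  have hpoint : ∀ x y, bond (flipOn C σ) x y = bond σ x y - 2 * cut x y - 2 * cut y x := by
    intro x y
    by_cases ha : G.Adj x y
    · by_cases hx : x ∈ C <;> by_cases hy : y ∈ C <;>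
        simp only [bond, cut, flipOn, ha, ha.symm, hx, hy, spin_not, ↓reduceIte, mul_neg,
          neg_mul, neg_neg, not_true_eq_false, not_false_eq_true, and_true, and_false, and_self,
          mul_zero, sub_zero] <;> ring
    · have ha' : ¬G.Adj y x := fun h => ha h.symm
      simp [bond, cut, ha, ha']
  have hcut : ∑ x ∈ K, ∑ y ∈ K, cut x y = ∑ x ∈ C, ∑ y ∈ nbr G hlf x \ C, spin (σ x) * spin (σ y) := by
    rw [← Finset.sum_subset (hC.trans Finset.subset_union_left : C ⊆ K)
      fun x _ hx => Finset.sum_eq_zero fun y _ => by simp [cut, hx]]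
    refine Finset.sum_congr rfl fun x hx => ?_
    rw [← Finset.sum_subset (Finset.sdiff_subset.trans (nbr_subset_cl (hC hx)) : _ ⊆ K)
      fun y _ hy => if_neg fun ⟨_, hyC, hxy⟩ => hy (Finset.mem_sdiff.mpr ⟨mem_nbr.mpr hxy, hyC⟩)]
    exact Finset.sum_congr rfl fun y hy => by simp_all [cut, mem_nbr]
  have hcut_symm : ∑ x ∈ K, ∑ y ∈ K, cut y x = ∑ x ∈ K, ∑ y ∈ K, cut x y := Finset.sum_comm
  simp only [henergy, hpoint, Finset.sum_sub_distrib, ← Finset.mul_sum, hcut_symm, hcut]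
  ring

end Graph

section Growth

variable (G : SimpleGraph V) (hlf : G.LocallyFinite) (o : V)

def upNbr (x : V) : Finset V := (nbr G hlf x).filter fun z => G.dist o z = G.dist o x + 1

def downNbr (x : V) : Finset V := (nbr G hlf x).filter fun z => G.dist o z ≤ G.dist o x

variable {G hlf}

lemma nbr_eq_upNbr_union_downNbr (x : V) :
    nbr G hlf x = upNbr G hlf o x ∪ downNbr G hlf o x := by
  ext y
  simp only [upNbr, downNbr, Finset.mem_union, Finset.mem_filter, mem_nbr]
  constructor
  · intro hxy
    have hdist := hxy.reachable.dist_triangle_right o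
    rw [SimpleGraph.dist_eq_one_iff_adj.mpr hxy] at hdist
    rcases Nat.lt_or_ge (G.dist o x) (G.dist o y) with hlt | hge
    · exact Or.inl ⟨hxy, by omega⟩
    · exact Or.inr ⟨hxy, hge⟩
  · rintro (⟨hxy, -⟩ | ⟨hxy, -⟩) <;> exact hxy

omit [DecidableEq V] in
lemma disjoint_upNbr_downNbr (x : V) : Disjoint (upNbr G hlf o x) (downNbr G hlf o x) := by
  refine Finset.disjoint_left.mpr fun y hup hdown => ?_
  simp only [upNbr, downNbr, Finset.mem_filter] at hup hdown
  omega

/-- An edge inside `C` that goes up from one endpoint goes down from the other. -/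
lemma sum_card_upNbr_inter_le (C : Finset V) :
    ∑ x ∈ C, #(upNbr G hlf o x ∩ C) ≤ ∑ x ∈ C, #(downNbr G hlf o x ∩ C) := by
  have hcount : ∀ A : Finset V, #(A ∩ C) = ∑ y ∈ C, if y ∈ A then 1 else 0 := fun A => by
    rw [Finset.inter_comm, ← Finset.filter_mem_eq_inter, Finset.card_filter]
  have hflip : ∀ x y, y ∈ upNbr G hlf o x → x ∈ downNbr G hlf o y := by
    simp only [upNbr, downNbr, Finset.mem_filter, mem_nbr]
    exact fun x y ⟨hxy, hd⟩ => ⟨hxy.symm, by omega⟩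
  calc ∑ x ∈ C, #(upNbr G hlf o x ∩ C)
      = ∑ y ∈ C, ∑ x ∈ C, if y ∈ upNbr G hlf o x then 1 else 0 := by
        simp only [hcount]; exact Finset.sum_comm
    _ ≤ ∑ y ∈ C, ∑ x ∈ C, if x ∈ downNbr G hlf o y then 1 else 0 :=
        Finset.sum_le_sum fun y _ => Finset.sum_le_sum fun x _ =>
          by by_cases h : y ∈ upNbr G hlf o x <;> simp [h, hflip x y]
    _ = ∑ y ∈ C, #(downNbr G hlf o y ∩ C) := by simp only [hcount]

variable {o}

lemma IsGrowing.mul_card_add_sum_card_downNbr_sdiff_le {g : ℕ} (hgrow : IsGrowing G hlf g o)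
    (C : Finset V) :
    g * #C + ∑ x ∈ C, #(downNbr G hlf o x \ C) ≤ ∑ x ∈ C, #(upNbr G hlf o x \ C) := by
  have hsum : ∑ x ∈ C, #(downNbr G hlf o x) + g * #C ≤ ∑ x ∈ C, #(upNbr G hlf o x) := by
    have := Finset.sum_le_sum fun x (_ : x ∈ C) =>
      (hgrow x : #(downNbr G hlf o x) + g ≤ #(upNbr G hlf o x))
    rwa [Finset.sum_add_distrib, Finset.sum_const, smul_eq_mul, mul_comm] at this
  have hsplit : ∀ A : V → Finset V,
      ∑ x ∈ C, #(A x) = ∑ x ∈ C, #(A x \ C) + ∑ x ∈ C, #(A x ∩ C) := fun A => by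
    rw [← Finset.sum_add_distrib]
    exact Finset.sum_congr rfl fun x _ => (Finset.card_sdiff_add_card_inter _ _).symm
  have hinter := sum_card_upNbr_inter_le (G := G) (hlf := hlf) o C
  rw [hsplit (downNbr G hlf o), hsplit (upNbr G hlf o)] at hsum
  omega

lemma IsGrowing.mul_card_le_sum_spin {g : ℕ} (hgrow : IsGrowing G hlf g o) (C : Finset V)
    (σ : V → Bool) (hup : ∀ x ∈ C, ∀ y ∈ upNbr G hlf o x \ C, σ y = true) :
    (g * #C : ℝ) ≤ ∑ x ∈ C, ∑ y ∈ nbr G hlf x \ C, spin (σ y) := by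
  have hvertex : ∀ x ∈ C, (#(upNbr G hlf o x \ C) : ℝ) - #(downNbr G hlf o x \ C) ≤
      ∑ y ∈ nbr G hlf x \ C, spin (σ y) := fun x hx => by
    rw [nbr_eq_upNbr_union_downNbr o x, Finset.union_sdiff_distrib,
      Finset.sum_union ((disjoint_upNbr_downNbr o x).mono Finset.sdiff_subset Finset.sdiff_subset),
      Finset.sum_congr rfl fun y hy => by rw [hup x hx y hy]]
    have hdown := Finset.card_nsmul_le_sum (downNbr G hlf o x \ C) (fun y => spin (σ y)) (-1)
      fun y _ => neg_one_le_spin _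
    simp only [spin, if_true, Finset.sum_const, nsmul_eq_mul, mul_one] at hdown ⊢
    linarith
  have hcount : (g * #C : ℝ) + ∑ x ∈ C, (#(downNbr G hlf o x \ C) : ℝ) ≤
      ∑ x ∈ C, (#(upNbr G hlf o x \ C) : ℝ) := by
    exact_mod_cast hgrow.mul_card_add_sum_card_downNbr_sdiff_le C
  have hsum := Finset.sum_le_sum hvertex
  rw [Finset.sum_sub_distrib] at hsum
  linarith

lemma IsGrowing.energyB_add_le_energyB_flipOn {g : ℕ} (hgrow : IsGrowing G hlf g o)
    {U C : Finset V} (hC : C ⊆ U) (σ : V → Bool) (hminus : ∀ x ∈ C, σ x = false)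
    (hup : ∀ x ∈ C, ∀ y ∈ upNbr G hlf o x \ C, σ y = true) :
    energyB G hlf U σ + 2 * g * #C ≤ energyB G hlf U (flipOn C σ) := by
  have hgain := hgrow.mul_card_le_sum_spin C σ hup
  have hcut : ∑ x ∈ C, ∑ y ∈ nbr G hlf x \ C, spin (σ x) * spin (σ y) =
      -∑ x ∈ C, ∑ y ∈ nbr G hlf x \ C, spin (σ y) := by
    simp only [← Finset.sum_neg_distrib]
    exact Finset.sum_congr rfl fun x hx => Finset.sum_congr rfl fun y _ => by
      rw [hminus x hx, spin, if_neg Bool.false_ne_true, neg_one_mul]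
  rw [energyB_flipOn hC, hcut]
  linarith

end Growth

lemma gProb_le_exp_neg_of_injective (E : (V → Bool) → ℝ) (A : Finset V) (η : V → Bool)
    (P : (V → Bool) → Prop) {φ : (∀ a ∈ A, Bool) → ∀ a ∈ A, Bool} (hφ : φ.Injective) (a : ℝ)
    (hgain : ∀ p, P (patch A η p) → E (patch A η p) + a ≤ E (patch A η (φ p))) :
    gProb E A η P ≤ Real.exp (-a) := by
  set I := A.pi fun _ => (Finset.univ : Finset Bool)
  have hI : ∀ p, p ∈ I := fun p => Finset.mem_pi.mpr fun _ _ => Finset.mem_univ _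
  have hZ : 0 < wsum E A η fun _ => 1 :=
    Finset.sum_pos (fun p _ => by positivity) ⟨fun _ _ => true, hI _⟩
  rw [gProb, gExp, div_le_iff₀ hZ]
  calc wsum E A η (fun σ => if P σ then 1 else 0)
      ≤ ∑ p ∈ I, Real.exp (-a) * Real.exp (E (patch A η (φ p))) := by
        refine Finset.sum_le_sum fun p _ => ?_
        dsimp only
        split_ifs with hp
        · rw [mul_one, ← Real.exp_add, Real.exp_le_exp]
          linarith [hgain p hp]
        · rw [mul_zero]
          positivity
    _ = Real.exp (-a) * ∑ q ∈ I.image φ, Real.exp (E (patch A η q)) := by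
        rw [Finset.mul_sum, Finset.sum_image hφ.injOn]
    _ ≤ Real.exp (-a) * wsum E A η fun _ => 1 := by
        refine mul_le_mul_of_nonneg_left ?_ (Real.exp_pos _).le
        simp only [wsum, mul_one]
        exact Finset.sum_le_sum_of_subset_of_nonneg (fun q _ => hI q) fun _ _ _ => by positivity

end IsingGlauber

theorem statement4_general {V : Type*} [DecidableEq V]
    (G : SimpleGraph V) (hlf : G.LocallyFinite)
    (g : ℕ) (o : V)
    (hgrow : IsGrowing G hlf g o)
    (β : ℝ) (hβ : 0 < β)
    (i : ℕ) (Bm : Finset V)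
    (S : Finset V) (hS : ∀ v ∈ S, G.dist o v = i)
    (U : Finset V) (hU : U = Bm.filter (fun v => i + 1 ≤ G.dist o v) ∪ S)
    (C : Finset V) (hC : C ⊆ U) :
    gProb (fun σ => β * energyB G hlf U σ) U
        (fun v => if G.dist o v ≤ i then false else true)
        (fun σ => (∀ z ∈ C, σ z = false) ∧ ∀ z ∈ vbd G hlf C ∩ U, σ z = true) ≤
      Real.exp (-(2 * (g : ℝ) * β) * (C.card : ℝ)) := by
  have hU_dist : ∀ x ∈ U, i ≤ G.dist o x := by
    intro x hx
    rcases Finset.mem_union.mp (hU ▸ hx) with hx | hx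
    · exact (Nat.le_succ i).trans (Finset.mem_filter.mp hx).2
    · exact (hS x hx).ge
  set η : V → Bool := fun v => if G.dist o v ≤ i then false else true
  rw [neg_mul]
  refine gProb_le_exp_neg_of_injective _ U _ _ (flipPi_injective C) _
    fun p ⟨hminus, hplus⟩ => ?_
  have hup : ∀ x ∈ C, ∀ y ∈ upNbr G hlf o x \ C, patch U η p y = true := by
    intro x hx y hy
    obtain ⟨hy, hyC⟩ := Finset.mem_sdiff.mp hy
    obtain ⟨hxy, hdist⟩ := Finset.mem_filter.mp hy
    by_cases hyU : y ∈ U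
    · exact hplus y (Finset.mem_inter.mpr ⟨mem_vbd hx (mem_nbr.mp hxy) hyC, hyU⟩)
    · have hx_dist := hU_dist x (hC hx)
      simp only [patch, hyU, dite_false, η]
      rw [if_neg (by omega)]
  have hgain := hgrow.energyB_add_le_energyB_flipOn hC _ hminus hup
  rw [patch_flipPi hC]
  linarith [mul_le_mul_of_nonneg_left hgain hβ.le]

/-- Claim 3.2 of the paper: under the all-minus boundary condition on
`B_i \ S` and plus on `∂_V B`, the probability that a whole subset `C ⊆ U` is minus
while its vertex boundary inside `U` is plus is at most `e^{-2gβ|C|}`. -/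
theorem statement4 {V : Type*} [DecidableEq V] [Infinite V]
    (G : SimpleGraph V) (hlf : G.LocallyFinite) (hconn : G.Connected)
    (g Δ : ℕ) (hg : 1 ≤ g) (o : V)
    (hgrow : IsGrowing G hlf g o)
    (hΔ : ∀ v : V, (nbr G hlf v).card ≤ Δ)
    (β : ℝ) (hβ : 0 < β)
    (m i : ℕ) (him : i ≤ m) (Bm : Finset V) (hBm : ∀ v : V, v ∈ Bm ↔ G.dist o v ≤ m)
    (S : Finset V) (hS : ∀ v ∈ S, G.dist o v = i)
    (U : Finset V) (hU : U = Bm.filter (fun v => i + 1 ≤ G.dist o v) ∪ S)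
    (C : Finset V) (hC : C ⊆ U) :
    gProb (fun σ => β * energyB G hlf U σ) U
        (fun v => if G.dist o v ≤ i then false else true)
        (fun σ => (∀ z ∈ C, σ z = false) ∧ ∀ z ∈ vbd G hlf C ∩ U, σ z = true) ≤
      Real.exp (-(2 * (g : ℝ) * β) * (C.card : ℝ)) :=
  statement4_general G hlf g o hgrow β hβ i Bm S hS U hU C hC
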